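/- Let α > 0 and let g : (0,1] → (0,∞) be continuous and such that lim_{x→0+} g(x)·e^{1/x^α} = 1. Define G(x) = ∫_x^1 du/g(u) for x ∈ (0,1]; then G is strictly decreasing with G(1) = 0 and G(x) → ∞ as x → 0+, and its inverse G⁻¹ : [0,∞) → (0,1] satisfies: (i) lim_{y→∞} G⁻¹(y)·(log y)^{1/α} = 1; (ii) G⁻¹ ∈ RV_∞(0); (iii) the function Γ := g∘G⁻¹ satisfies lim_{y→∞} Γ(y)·y·(log y)^{(α+1)/α} = 1/α and Γ ∈ RV_∞(−1). -/

import Mathlib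

/-! Put Ψ(y) = y^(α+1) e^(1/y^α). As u → 0+, −Ψ'(u)/α ~ e^(1/u^α) ~ 1/g(u), and since these
integrands have divergent integrals at 0, integrating the equivalence gives G(y) ~ Ψ(y)/α;
taking logarithms, y^α log G(y) → 1. Substituting y = G⁻¹(z) gives (i) and, together with
g(y) ~ e^(−1/y^α), (iii). Since log(λz)/log z → 1, (i) and (iii) exhibit G⁻¹ and g ∘ G⁻¹ as
a constant times a regularly varying function of index 0 and −1 respectively. -/

open Filter Set Real MeasureTheory

/-- `f` is regularly varying at infinity with index `α`. -/
def RVatTop (f : ℝ → ℝ) (α : ℝ) : Prop :=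
  ∀ lam : ℝ, 0 < lam →
    Filter.Tendsto (fun t => f (lam * t) / f t) Filter.atTop (nhds (lam ^ α))

/-- `G(y) = ∫_y^1 du / g(u)`. -/
noncomputable def Gfun (g : ℝ → ℝ) : ℝ → ℝ := fun y => ∫ u in y..(1:ℝ), 1 / g u

open Topology Asymptotics Function

theorem MeasureTheory.LocallyIntegrableOn.intervalIntegrable_of_ordConnected {f : ℝ → ℝ}
    {s : Set ℝ} (hf : LocallyIntegrableOn f s) (hs : s.OrdConnected) ⦃x y : ℝ⦄ (hx : x ∈ s)
    (hy : y ∈ s) : IntervalIntegrable f volume x y :=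
  (hf.integrableOn_compact_subset (hs.uIcc_subset hx hy) isCompact_uIcc).intervalIntegrable

theorem isLittleO_intervalIntegral_of_isLittleO {f h : ℝ → ℝ} {a b : ℝ} (hab : a < b)
    (hf : LocallyIntegrableOn f (Ioc a b)) (hh : LocallyIntegrableOn h (Ioc a b))
    (hh0 : ∀ᶠ u in 𝓝[>] a, 0 ≤ h u) (hfh : f =o[𝓝[>] a] h)
    (hH : Tendsto (fun y => ∫ u in y..b, h u) (𝓝[>] a) atTop) :
    (fun y => ∫ u in y..b, f u) =o[𝓝[>] a] fun y => ∫ u in y..b, h u := by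
  have hfI := hf.intervalIntegrable_of_ordConnected ordConnected_Ioc
  have hhI := hh.intervalIntegrable_of_ordConnected ordConnected_Ioc
  rw [isLittleO_iff]
  intro ε hε
  obtain ⟨δ, hδ, hδfh⟩ : ∃ δ ∈ Ioc a b, ∀ u ∈ Ioc a δ, ‖f u‖ ≤ ε / 2 * h u := by
    obtain ⟨δ, hδ, hsub⟩ := mem_nhdsGT_iff_exists_Ioc_subset.1
      ((hfh.bound (half_pos hε)).and hh0)
    refine ⟨min δ b, ⟨lt_min hδ hab, min_le_right _ _⟩, fun u hu => ?_⟩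
    obtain ⟨hfu, hhu⟩ := hsub ⟨hu.1, hu.2.trans (min_le_left _ _)⟩
    rwa [norm_of_nonneg hhu] at hfu
  have hb : b ∈ Ioc a b := ⟨hab, le_rfl⟩
  -- the part of the integrals over `[δ, b]` is a constant, negligible against `∫ h → ∞`
  have hconst : ∀ᶠ y in 𝓝[>] a,
      ‖∫ u in δ..b, f u‖ + ε / 2 * |∫ u in δ..b, h u| ≤ ε / 2 * ∫ u in y..b, h u :=
    (hH.const_mul_atTop (half_pos hε)).eventually_ge_atTop _
  filter_upwards [Ioo_mem_nhdsGT hδ.1, hconst, hH.eventually_ge_atTop 0] with y hy hc hHy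
  have hyab : y ∈ Ioc a b := ⟨hy.1, hy.2.le.trans hδ.2⟩
  have hnear : ‖∫ u in y..δ, f u‖ ≤ ε / 2 * ∫ u in y..δ, h u := by
    rw [← intervalIntegral.integral_const_mul]
    exact intervalIntegral.norm_integral_le_of_norm_le hy.2.le
      (ae_of_all _ fun u hu => hδfh u ⟨hy.1.trans hu.1, hu.2⟩) ((hhI hyab hδ).const_mul _)
  have hsplit := intervalIntegral.integral_add_adjacent_intervals (hhI hyab hδ) (hhI hδ hb)
  have hrest := mul_le_mul_of_nonneg_left (neg_le_abs (∫ u in δ..b, h u)) (half_pos hε).le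
  rw [← intervalIntegral.integral_add_adjacent_intervals (hfI hyab hδ) (hfI hδ hb),
    norm_of_nonneg hHy, ← hsplit]
  rw [← hsplit] at hc
  linarith [norm_add_le (∫ u in y..δ, f u) (∫ u in δ..b, f u)]

theorem isEquivalent_intervalIntegral_of_isEquivalent {f h : ℝ → ℝ} {a b : ℝ} (hab : a < b)
    (hf : LocallyIntegrableOn f (Ioc a b)) (hh : LocallyIntegrableOn h (Ioc a b))
    (hh0 : ∀ᶠ u in 𝓝[>] a, 0 ≤ h u) (hfh : f ~[𝓝[>] a] h)
    (hH : Tendsto (fun y => ∫ u in y..b, h u) (𝓝[>] a) atTop) :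
    (fun y => ∫ u in y..b, f u) ~[𝓝[>] a] fun y => ∫ u in y..b, h u := by
  refine (isLittleO_intervalIntegral_of_isLittleO hab (hf.sub hh) hh hh0 hfh.isLittleO hH).congr'
    ?_ EventuallyEq.rfl
  filter_upwards [Ioc_mem_nhdsGT hab] with y hy
  exact (intervalIntegral.integral_sub
    (hf.intervalIntegrable_of_ordConnected ordConnected_Ioc hy ⟨hab, le_rfl⟩)
    (hh.intervalIntegrable_of_ordConnected ordConnected_Ioc hy ⟨hab, le_rfl⟩))

namespace RVatTop

theorem mul {f h : ℝ → ℝ} {a b : ℝ} (hf : RVatTop f a) (hh : RVatTop h b) :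
    RVatTop (fun t => f t * h t) (a + b) := fun lam hlam => by
  simpa only [mul_div_mul_comm, rpow_add hlam] using (hf lam hlam).mul (hh lam hlam)

theorem of_tendsto_mul {f h : ℝ → ℝ} {ρ c : ℝ} (hh : RVatTop h ρ)
    (hfh : Tendsto (fun t => f t * h t) atTop (𝓝 c)) (hc : c ≠ 0) : RVatTop f (-ρ) := by
  intro lam hlam
  have hscaled : Tendsto (fun t => f (lam * t) * h (lam * t)) atTop (𝓝 c) :=
    hfh.comp (tendsto_id.const_mul_atTop hlam)
  have hquot := (hscaled.div hfh hc).div (hh lam hlam) (rpow_pos_of_pos hlam ρ).ne'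
  rw [div_self hc, one_div, ← rpow_neg hlam.le] at hquot
  refine hquot.congr' ?_
  filter_upwards [hfh.eventually_ne hc, hscaled.eventually_ne hc] with t ht hlt
  obtain ⟨hft, hht⟩ := mul_ne_zero_iff.1 ht
  obtain ⟨hflt, hhlt⟩ := mul_ne_zero_iff.1 hlt
  show f (lam * t) * h (lam * t) / (f t * h t) / (h (lam * t) / h t) = f (lam * t) / f t
  field_simp

end RVatTop

theorem rvAtTop_id : RVatTop (fun t => t) 1 := fun lam hlam => by
  rw [rpow_one]
  refine tendsto_const_nhds.congr' ?_
  filter_upwards [eventually_ne_atTop 0] with t ht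
  rw [mul_div_cancel_right₀ _ ht]

theorem rvAtTop_log_rpow (β : ℝ) : RVatTop (fun t => log t ^ β) 0 := fun lam hlam => by
  have hratio : Tendsto (fun t => log (lam * t) / log t) atTop (𝓝 1) := by
    have h := (tendsto_const_nhds (x := log lam)).div_atTop tendsto_log_atTop |>.add_const 1
    rw [zero_add] at h
    refine h.congr' ?_
    filter_upwards [tendsto_log_atTop.eventually_gt_atTop 0, eventually_gt_atTop 0]
      with t ht ht0
    rw [log_mul hlam.ne' ht0.ne', add_div, div_self ht.ne']
  have h := (continuousAt_rpow_const 1 β (Or.inl one_ne_zero)).tendsto.comp hratio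
  rw [one_rpow] at h
  rw [rpow_zero]
  refine h.congr' ?_
  filter_upwards [tendsto_log_atTop.eventually_ge_atTop 0,
    (tendsto_log_atTop.comp (tendsto_id.const_mul_atTop hlam)).eventually_ge_atTop 0]
    with t ht hlt
  exact div_rpow hlt ht β

theorem tendsto_invFunOn_atTop_nhdsGT_zero {f : ℝ → ℝ} (hf : AntitoneOn f (Ioc 0 1))
    (hsurj : SurjOn f (Ioc 0 1) (Ici 0)) : Tendsto (invFunOn f (Ioc 0 1)) atTop (𝓝[>] 0) := by
  have hmem : ∀ᶠ z in atTop,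
      invFunOn f (Ioc 0 1) z ∈ Ioc 0 1 ∧ f (invFunOn f (Ioc 0 1) z) = z :=
    (eventually_ge_atTop 0).mono fun z hz => invFunOn_pos (hsurj hz)
  refine tendsto_nhdsWithin_iff.2 ⟨tendsto_order.2 ⟨fun a ha => ?_, fun ε hε => ?_⟩,
    hmem.mono fun z hz => hz.1.1⟩
  · exact hmem.mono fun z hz => ha.trans hz.1.1
  · have hε' : min ε 1 ∈ Ioc (0:ℝ) 1 := ⟨lt_min hε one_pos, min_le_right _ _⟩
    filter_upwards [hmem, eventually_gt_atTop (f (min ε 1))] with z ⟨hz, hfz⟩ hzf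
    by_contra! hle
    have := hf hε' hz ((min_le_left _ _).trans hle)
    linarith

theorem tendsto_comp_invFunOn {β : Type*} {f : ℝ → ℝ} {s : Set ℝ} {l : Filter ℝ}
    {l' : Filter β} (Φ : ℝ → ℝ → β) (hsurj : SurjOn f s (Ici 0))
    (hinv : Tendsto (invFunOn f s) atTop l)
    (hΦ : Tendsto (fun y => Φ y (f y)) l l') :
    Tendsto (fun z => Φ (invFunOn f s z) z) atTop l' := by
  refine (hΦ.comp hinv).congr' ?_
  filter_upwards [eventually_ge_atTop 0] with z hz
  rw [Function.comp_apply, invFunOn_eq (hsurj hz)]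

noncomputable def Ψ (α y : ℝ) : ℝ := y ^ (α + 1) * exp (1 / y ^ α)

section
variable {α : ℝ}

theorem hasDerivAt_Ψ {u : ℝ} (hu : 0 < u) :
    HasDerivAt (Ψ α) (-(exp (1 / u ^ α) * (α - (α + 1) * u ^ α))) u := by
  have hpow : HasDerivAt (fun y : ℝ => y ^ (α + 1)) ((α + 1) * u ^ α) u := by
    simpa using hasDerivAt_rpow_const (x := u) (p := α + 1) (Or.inl hu.ne')
  have hinv : HasDerivAt (fun y : ℝ => 1 / y ^ α) (-α * u ^ (-α - 1)) u := by
    refine (hasDerivAt_rpow_const (p := -α) (Or.inl hu.ne')).congr_of_eventuallyEq ?_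
    filter_upwards [eventually_gt_nhds hu] with y hy
    rw [rpow_neg hy.le, one_div]
  refine (hpow.mul hinv.exp).congr_deriv ?_
  have hcancel : u ^ (α + 1) * u ^ (-α - 1) = 1 := by
    rw [← rpow_add hu]; norm_num
  linear_combination (-α * exp (1 / u ^ α)) * hcancel

theorem tendsto_rpow_nhdsGT_zero_of_pos (hα : 0 < α) :
    Tendsto (fun y : ℝ => y ^ α) (𝓝[>] 0) (𝓝 0) := by
  simpa [zero_rpow hα.ne'] using
    ((continuousAt_rpow_const 0 α (Or.inr hα.le)).tendsto).mono_left nhdsWithin_le_nhds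

theorem tendsto_one_div_rpow_atTop (hα : 0 < α) :
    Tendsto (fun y : ℝ => 1 / y ^ α) (𝓝[>] 0) atTop := by
  refine (tendsto_rpow_neg_nhdsGT_zero (neg_lt_zero.2 hα)).congr' ?_
  filter_upwards [self_mem_nhdsWithin] with y (hy : 0 < y)
  rw [rpow_neg hy.le, one_div]

theorem tendsto_Ψ_atTop (hα : 0 < α) : Tendsto (Ψ α) (𝓝[>] 0) atTop := by
  refine ((tendsto_exp_div_rpow_atTop ((α + 1) / α)).comp
    (tendsto_one_div_rpow_atTop hα)).congr' ?_
  filter_upwards [self_mem_nhdsWithin] with y (hy : 0 < y)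
  have hpow : (1 / y ^ α) ^ ((α + 1) / α) = (y ^ (α + 1))⁻¹ := by
    rw [one_div, inv_rpow (rpow_nonneg hy.le _), ← rpow_mul hy.le, mul_div_cancel₀ _ hα.ne']
  simp only [Function.comp, hpow, div_inv_eq_mul, Ψ, mul_comm]

theorem continuousOn_exp_one_div_rpow_mul :
    ContinuousOn (fun u : ℝ => exp (1 / u ^ α) * (α - (α + 1) * u ^ α)) (Ioi 0) := by
  have hpow : ContinuousOn (fun u : ℝ => u ^ α) (Ioi 0) :=
    continuousOn_id.rpow_const fun u hu => Or.inl (ne_of_gt hu)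
  exact ((continuousOn_const.div hpow fun u hu => (rpow_pos_of_pos hu α).ne').rexp).mul
    (continuousOn_const.sub (continuousOn_const.mul hpow))

theorem integral_exp_one_div_rpow_mul {x y : ℝ} (hx : 0 < x) (hy : 0 < y) :
    ∫ u in x..y, exp (1 / u ^ α) * (α - (α + 1) * u ^ α) = Ψ α x - Ψ α y := by
  have hsub : uIcc x y ⊆ Ioi 0 := fun u hu => lt_of_lt_of_le (lt_min hx hy) hu.1
  rw [← neg_sub, ← intervalIntegral.integral_eq_sub_of_hasDerivAt
    (fun u hu => hasDerivAt_Ψ (hsub hu))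
    (continuousOn_exp_one_div_rpow_mul.mono hsub).intervalIntegrable.neg,
    intervalIntegral.integral_neg, neg_neg]

end

theorem Gfun_one (g : ℝ → ℝ) : Gfun g 1 = 0 := intervalIntegral.integral_same

section
variable {g : ℝ → ℝ} (hgcont : ContinuousOn g (Ioc 0 1)) (hgpos : ∀ y ∈ Ioc (0:ℝ) 1, 0 < g y)
include hgcont hgpos

theorem continuousOn_one_div_of_pos : ContinuousOn (fun u => 1 / g u) (Ioc 0 1) :=
  continuousOn_const.div hgcont fun y hy => (hgpos y hy).ne'

theorem intervalIntegrable_one_div_of_pos {a b : ℝ} (ha : a ∈ Ioc (0:ℝ) 1)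
    (hb : b ∈ Ioc (0:ℝ) 1) : IntervalIntegrable (fun u => 1 / g u) volume a b :=
  ((continuousOn_one_div_of_pos hgcont hgpos).mono
    (ordConnected_Ioc.uIcc_subset ha hb)).intervalIntegrable

theorem Gfun_eq_integral_add {a b : ℝ} (ha : a ∈ Ioc (0:ℝ) 1) (hb : b ∈ Ioc (0:ℝ) 1) :
    Gfun g a = (∫ u in a..b, 1 / g u) + Gfun g b :=
  (intervalIntegral.integral_add_adjacent_intervals
    (intervalIntegrable_one_div_of_pos hgcont hgpos ha hb)
    (intervalIntegrable_one_div_of_pos hgcont hgpos hb (right_mem_Ioc.2 one_pos))).symm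

theorem strictAntiOn_Gfun : StrictAntiOn (Gfun g) (Ioc 0 1) := by
  intro a ha b hb hab
  have hpos : 0 < ∫ u in a..b, 1 / g u :=
    intervalIntegral.intervalIntegral_pos_of_pos_on
      (intervalIntegrable_one_div_of_pos hgcont hgpos ha hb)
      (fun x hx => one_div_pos.2 (hgpos x ⟨ha.1.trans hx.1, hx.2.le.trans hb.2⟩)) hab
  linarith [Gfun_eq_integral_add hgcont hgpos ha hb]

theorem continuousOn_Gfun_Icc {a : ℝ} (ha : a ∈ Ioc (0:ℝ) 1) :
    ContinuousOn (Gfun g) (Icc a 1) := by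
  have hint : IntegrableOn (fun u => 1 / g u) (uIcc a 1) := by
    rw [uIcc_of_le ha.2]
    exact ((continuousOn_one_div_of_pos hgcont hgpos).mono
      fun x hx => ⟨ha.1.trans_le hx.1, hx.2⟩).integrableOn_Icc
  have hprim := intervalIntegral.continuousOn_primitive_interval_left hint
  rwa [uIcc_of_le ha.2] at hprim

theorem surjOn_Gfun (hG : Tendsto (Gfun g) (𝓝[>] 0) atTop) :
    SurjOn (Gfun g) (Ioc 0 1) (Ici 0) := by
  intro z (hz : 0 ≤ z)
  have hev : ∀ᶠ y in 𝓝[>] (0:ℝ), y ∈ Ioc 0 1 ∧ z ≤ Gfun g y :=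
    Eventually.and (Ioc_mem_nhdsGT one_pos) (hG.eventually_ge_atTop z)
  obtain ⟨a, ha, hza⟩ := hev.exists
  obtain ⟨y, hy, rfl⟩ := intermediate_value_Icc' ha.2 (continuousOn_Gfun_Icc hgcont hgpos ha)
    ⟨by rwa [Gfun_one], hza⟩
  exact ⟨y, ⟨ha.1.trans_le hy.1, hy.2⟩, rfl⟩

end

section
variable {α : ℝ} (hα : 0 < α) {g : ℝ → ℝ}
    (hgasy : Tendsto (fun y => g y * exp (1 / y ^ α)) (𝓝[>] 0) (𝓝 1))
include hα hgasy

theorem isEquivalent_one_div_of_tendsto_mul_exp :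
    (fun u => 1 / g u) ~[𝓝[>] 0] fun u => exp (1 / u ^ α) * (α - (α + 1) * u ^ α) / α := by
  have hg : (fun u => 1 / g u) ~[𝓝[>] 0] fun u => exp (1 / u ^ α) := by
    refine isEquivalent_of_tendsto_one ?_
    have hinv := hgasy.inv₀ one_ne_zero
    rw [inv_one] at hinv
    refine hinv.congr fun u => ?_
    rw [Pi.div_apply, div_div, inv_eq_one_div]
  refine hg.trans (isEquivalent_of_tendsto_one ?_).symm
  have hpow := tendsto_rpow_nhdsGT_zero_of_pos hα
  have hlim : Tendsto (fun u : ℝ => 1 - (α + 1) / α * u ^ α) (𝓝[>] 0) (𝓝 1) := by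
    simpa using (hpow.const_mul ((α + 1) / α)).const_sub 1
  refine hlim.congr fun u => ?_
  simp only [Pi.div_apply]
  field_simp

end

section
variable {α : ℝ} (hα : 0 < α) {g : ℝ → ℝ} (hgcont : ContinuousOn g (Ioc 0 1))
    (hgpos : ∀ y ∈ Ioc (0:ℝ) 1, 0 < g y)
    (hgasy : Tendsto (fun y => g y * exp (1 / y ^ α)) (𝓝[>] 0) (𝓝 1))
include hα hgcont hgpos hgasy

theorem isEquivalent_Gfun : Gfun g ~[𝓝[>] 0] fun y => Ψ α y / α := by
  have hprim : (fun y => ∫ u in y..1, exp (1 / u ^ α) * (α - (α + 1) * u ^ α) / α)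
      =ᶠ[𝓝[>] 0] fun y => Ψ α y / α - Ψ α 1 / α := by
    filter_upwards [Ioc_mem_nhdsGT one_pos] with y hy
    rw [intervalIntegral.integral_div, integral_exp_one_div_rpow_mul hy.1 one_pos, sub_div]
  have hΨ := (tendsto_Ψ_atTop hα).atTop_div_const hα
  have hnonneg : ∀ᶠ u in 𝓝[>] (0:ℝ), 0 ≤ exp (1 / u ^ α) * (α - (α + 1) * u ^ α) / α := by
    have hpow := tendsto_rpow_nhdsGT_zero_of_pos hα
    filter_upwards [(hpow.const_mul (α + 1)).eventually (eventually_le_nhds (by simpa using hα))]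
      with u hu
    have : 0 ≤ α - (α + 1) * u ^ α := by linarith
    positivity
  have hGequiv := isEquivalent_intervalIntegral_of_isEquivalent zero_lt_one
    ((continuousOn_one_div_of_pos hgcont hgpos).locallyIntegrableOn measurableSet_Ioc)
    ((continuousOn_exp_one_div_rpow_mul.div_const α).mono Ioc_subset_Ioi_self
      |>.locallyIntegrableOn measurableSet_Ioc)
    hnonneg (isEquivalent_one_div_of_tendsto_mul_exp hα hgasy)
    ((tendsto_atTop_add_const_right _ _ hΨ).congr' hprim.symm)
  exact (hGequiv.congr_right hprim).trans (IsEquivalent.refl.sub_isLittleO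
    (isLittleO_const_left.2 (Or.inr (tendsto_norm_atTop_atTop.comp hΨ))))

theorem tendsto_Gfun_atTop : Tendsto (Gfun g) (𝓝[>] 0) atTop :=
  (isEquivalent_Gfun hα hgcont hgpos hgasy).symm.tendsto_atTop
    ((tendsto_Ψ_atTop hα).atTop_div_const hα)

theorem tendsto_Gfun_div_Ψ : Tendsto (fun y => Gfun g y / (Ψ α y / α)) (𝓝[>] 0) (𝓝 1) :=
  (isEquivalent_iff_tendsto_one
    (((tendsto_Ψ_atTop hα).atTop_div_const hα).eventually_ne_atTop 0)).1
    (isEquivalent_Gfun hα hgcont hgpos hgasy)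

theorem tendsto_rpow_mul_log_Gfun :
    Tendsto (fun y => y ^ α * log (Gfun g y)) (𝓝[>] 0) (𝓝 1) := by
  have hratio := tendsto_Gfun_div_Ψ hα hgcont hgpos hgasy
  have hpow := tendsto_rpow_nhdsGT_zero_of_pos hα
  have hlim := (((hpow.mul ((continuousAt_log one_ne_zero).tendsto.comp hratio)).add
    ((tendsto_log_mul_rpow_nhdsGT_zero hα).const_mul (α + 1))).sub
    (hpow.const_mul (log α))).add_const 1
  simp only [log_one, mul_zero, add_zero, sub_zero, zero_add] at hlim
  refine hlim.congr' ?_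
  filter_upwards [self_mem_nhdsWithin,
    (tendsto_Gfun_atTop hα hgcont hgpos hgasy).eventually_gt_atTop 0] with y (hy : 0 < y) hG
  have hΨy : 0 < Ψ α y := mul_pos (rpow_pos_of_pos hy _) (exp_pos _)
  have hyα : 0 < y ^ α := rpow_pos_of_pos hy α
  simp only [Function.comp, Ψ] at hΨy ⊢
  -- `log G = log (G / (Ψ / α)) + (α + 1) log y + 1 / y ^ α - log α`
  rw [log_div hG.ne' (by positivity), log_div hΨy.ne' hα.ne',
    log_mul (by positivity) (exp_pos _).ne', log_rpow hy, log_exp]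
  field_simp
  ring

theorem tendsto_rpow_mul_log_Gfun_rpow (p : ℝ) :
    Tendsto (fun y => y ^ (α * p) * log (Gfun g y) ^ p) (𝓝[>] 0) (𝓝 1) := by
  have h := (continuousAt_rpow_const 1 p (Or.inl one_ne_zero)).tendsto.comp
    (tendsto_rpow_mul_log_Gfun hα hgcont hgpos hgasy)
  rw [one_rpow] at h
  refine h.congr' ?_
  filter_upwards [self_mem_nhdsWithin,
    (tendsto_Gfun_atTop hα hgcont hgpos hgasy).eventually_ge_atTop 1] with y (hy : 0 < y) hG
  rw [Function.comp_apply, mul_rpow (rpow_nonneg hy.le α) (log_nonneg hG), ← rpow_mul hy.le]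

theorem tendsto_mul_log_Gfun_rpow :
    Tendsto (fun y => y * log (Gfun g y) ^ (1 / α)) (𝓝[>] 0) (𝓝 1) := by
  simpa only [mul_one_div_cancel hα.ne', rpow_one] using
    tendsto_rpow_mul_log_Gfun_rpow hα hgcont hgpos hgasy (1 / α)

theorem tendsto_mul_Gfun_mul_log_Gfun_rpow :
    Tendsto (fun y => g y * Gfun g y * log (Gfun g y) ^ ((α + 1) / α)) (𝓝[>] 0)
      (𝓝 (1 / α)) := by
  have h := ((hgasy.mul (tendsto_Gfun_div_Ψ hα hgcont hgpos hgasy)).mul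
    (tendsto_rpow_mul_log_Gfun_rpow hα hgcont hgpos hgasy ((α + 1) / α))).div_const α
  rw [mul_one, mul_one] at h
  refine h.congr' ?_
  filter_upwards [self_mem_nhdsWithin] with y (hy : 0 < y)
  have hyα : 0 < y ^ (α + 1) := rpow_pos_of_pos hy _
  rw [mul_div_cancel₀ _ hα.ne', Ψ]
  field_simp

end

theorem stmt19
    (α : ℝ) (hα : 0 < α) (g : ℝ → ℝ)
    (hgcont : ContinuousOn g (Set.Ioc 0 1))
    (hgpos : ∀ y ∈ Set.Ioc (0:ℝ) 1, 0 < g y)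
    (hgasy : Filter.Tendsto (fun y => g y * Real.exp (1 / y ^ α))
      (nhdsWithin 0 (Set.Ioi 0)) (nhds 1)) :
    StrictAntiOn (Gfun g) (Set.Ioc 0 1) ∧
    Gfun g 1 = 0 ∧
    Filter.Tendsto (Gfun g) (nhdsWithin 0 (Set.Ioi 0)) Filter.atTop ∧
    ∃ Ginv : ℝ → ℝ,
      (∀ z : ℝ, 0 ≤ z → Ginv z ∈ Set.Ioc (0:ℝ) 1 ∧ Gfun g (Ginv z) = z) ∧
      (∀ y ∈ Set.Ioc (0:ℝ) 1, Ginv (Gfun g y) = y) ∧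
      Filter.Tendsto (fun z => Ginv z * Real.log z ^ (1 / α))
        Filter.atTop (nhds 1) ∧
      RVatTop Ginv 0 ∧
      Filter.Tendsto
        (fun z => g (Ginv z) * z * Real.log z ^ ((α + 1) / α))
        Filter.atTop (nhds (1 / α)) ∧
      RVatTop (fun z => g (Ginv z)) (-1) := by
  have hanti := strictAntiOn_Gfun hgcont hgpos
  have hGtop := tendsto_Gfun_atTop hα hgcont hgpos hgasy
  have hsurj := surjOn_Gfun hgcont hgpos hGtop
  have hinv := tendsto_invFunOn_atTop_nhdsGT_zero hanti.antitoneOn hsurj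
  have hI := tendsto_comp_invFunOn (fun y z => y * log z ^ (1 / α)) hsurj hinv
    (tendsto_mul_log_Gfun_rpow hα hgcont hgpos hgasy)
  have hIII := tendsto_comp_invFunOn (fun y z => g y * z * log z ^ ((α + 1) / α)) hsurj hinv
    (tendsto_mul_Gfun_mul_log_Gfun_rpow hα hgcont hgpos hgasy)
  refine ⟨hanti, Gfun_one g, hGtop, invFunOn (Gfun g) (Ioc 0 1),
    fun z hz => invFunOn_pos (hsurj hz), fun y hy => hanti.injOn.leftInvOn_invFunOn hy,
    hI, ?_, hIII, ?_⟩
  · simpa using (rvAtTop_log_rpow (1 / α)).of_tendsto_mul hI one_ne_zero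
  · have hRV := (rvAtTop_id.mul (rvAtTop_log_rpow ((α + 1) / α))).of_tendsto_mul
      (by simpa only [mul_assoc] using hIII) (one_div_ne_zero hα.ne')
    simpa using hRV
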